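/- Let k be a field of characteristic 0 and a, b ∈ k with ab ≠ 1. Then there is a k-algebra isomorphism k⟨x,y⟩/(xy² + yxy + y²x + ax³, yx² + xyx + x²y + by³) ≅ k⟨x,y,X,Y⟩/(3x³ − 3X, xy² + yxy + y²x + aX, yx² + xyx + x²y + bY, 3y³ − 3Y, Xx − xX, Xy − yX, Yx − xY, Yy − yY, XY − YX) sending (the images of) x to x and y to y. (The right-hand algebra is the generalized Clifford algebra A(M₁, M₂) with M₁ = ((3, −a),(0, 0)) and M₂ = ((0, 0),(−b, 3)).) -/

import Mathlib

/-!
Conjugating the relation `yx² + xyx + x²y = -b y³` by `x` gives `[x³, y] = b [y³, x]`, and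
symmetrically `[y³, x] = a [x³, y]`; hence `(1 - ab) [x³, y] = 0`, so for `ab ≠ 1` the cubes `x³`,
`y³` are central in `k⟨x,y⟩/(r₁, r₂)` and `X ↦ x³`, `Y ↦ y³` defines an inverse of the obvious map
`k⟨x,y⟩/(r₁, r₂) → A(M₁, M₂)`. In the other direction `3x³ = 3X` forces `X = x³` in characteristic
`0`, so both algebras are generated by `x` and `y`.
-/

/-- `x`, the first generator of the free algebra `k⟨x,y⟩`. -/
noncomputable def Xg (k : Type*) [CommRing k] : FreeAlgebra k (Fin 2) :=
  FreeAlgebra.ι k 0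

/-- `y`, the second generator of the free algebra `k⟨x,y⟩`. -/
noncomputable def Yg (k : Type*) [CommRing k] : FreeAlgebra k (Fin 2) :=
  FreeAlgebra.ι k 1

/-- The relation identifying `r₁ = xy² + yxy + y²x + ax³` and
`r₂ = yx² + xyx + x²y + by³` with `0`; `RingQuot` of this relation is
`k⟨x,y⟩/(r₁, r₂)`. -/
noncomputable def relLHS (k : Type*) [CommRing k] (a b : k) :
    FreeAlgebra k (Fin 2) → FreeAlgebra k (Fin 2) → Prop := fun p q =>
  (p = Xg k * Yg k * Yg k + Yg k * Xg k * Yg k + Yg k * Yg k * Xg k +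
        a • (Xg k * Xg k * Xg k) ∨
   p = Yg k * Xg k * Xg k + Xg k * Yg k * Xg k + Xg k * Xg k * Yg k +
        b • (Yg k * Yg k * Yg k)) ∧ q = 0

/-- The generators `x, y, X, Y` of the free algebra `k⟨x,y,X,Y⟩`. -/
noncomputable def G (k : Type*) [CommRing k] (i : Fin 4) : FreeAlgebra k (Fin 4) :=
  FreeAlgebra.ι k i

/-- The relation identifying the nine defining relations of the generalized Clifford
algebra `A(M₁, M₂)` (with `M₁ = ((3, −a),(0,0))`, `M₂ = ((0,0),(−b,3))`) with `0`:
`3x³ − 3X`, `xy² + yxy + y²x + aX`, `yx² + xyx + x²y + bY`, `3y³ − 3Y`, and the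
relations making `X` and `Y` central (w.r.t. the generators). -/
noncomputable def relRHS (k : Type*) [CommRing k] (a b : k) :
    FreeAlgebra k (Fin 4) → FreeAlgebra k (Fin 4) → Prop := fun p q =>
  p ∈ ({(3 : k) • (G k 0 * G k 0 * G k 0) - (3 : k) • G k 2,
        G k 0 * G k 1 * G k 1 + G k 1 * G k 0 * G k 1 + G k 1 * G k 1 * G k 0 +
          a • G k 2,
        G k 1 * G k 0 * G k 0 + G k 0 * G k 1 * G k 0 + G k 0 * G k 0 * G k 1 +
          b • G k 3,
        (3 : k) • (G k 1 * G k 1 * G k 1) - (3 : k) • G k 3,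
        G k 2 * G k 0 - G k 0 * G k 2,
        G k 2 * G k 1 - G k 1 * G k 2,
        G k 3 * G k 0 - G k 0 * G k 3,
        G k 3 * G k 1 - G k 1 * G k 3,
        G k 2 * G k 3 - G k 3 * G k 2} : Set (FreeAlgebra k (Fin 4))) ∧ q = 0

theorem cube_commutator_eq_smul {R A : Type*} [CommRing R] [Ring A] [Algebra R A]
    {x y : A} {b : R}
    (h : y * x * x + x * y * x + x * x * y + b • (y * y * y) = 0) :
    x * x * x * y - y * (x * x * x) = b • (y * y * y * x - x * (y * y * y)) := by
  have hsum := eq_neg_of_add_eq_zero_left h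
  calc x * x * x * y - y * (x * x * x)
      = x * (y * x * x + x * y * x + x * x * y) - (y * x * x + x * y * x + x * x * y) * x := by
        noncomm_ring
    _ = b • (y * y * y * x - x * (y * y * y)) := by
        rw [hsum, mul_neg, neg_mul, mul_smul_comm, smul_mul_assoc, smul_sub]
        abel

theorem commute_cubes_of_mul_ne_one {k A : Type*} [Field k] [Ring A] [Algebra k A]
    {x y : A} {a b : k} (hab : a * b ≠ 1)
    (h₁ : x * y * y + y * x * y + y * y * x + a • (x * x * x) = 0)
    (h₂ : y * x * x + x * y * x + x * x * y + b • (y * y * y) = 0) :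
    Commute (x * x * x) y ∧ Commute (y * y * y) x := by
  have e₁ := cube_commutator_eq_smul h₂
  have e₂ := cube_commutator_eq_smul h₁
  have hx : x * x * x * y - y * (x * x * x) = 0 := by
    have h : (1 - a * b) • (x * x * x * y - y * (x * x * x)) = 0 := by
      rw [sub_smul, one_smul, mul_comm, ← smul_smul, ← e₂, ← e₁, sub_self]
    exact (smul_eq_zero.mp h).resolve_left (sub_ne_zero.mpr hab.symm)
  have hy : y * y * y * x - x * (y * y * y) = 0 := by
    rw [e₂, hx, smul_zero]
  exact ⟨sub_eq_zero.mp hx, sub_eq_zero.mp hy⟩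

section CommRing

variable (k : Type*) [CommRing k] (a b : k) {B : Type*} [Ring B] [Algebra k B]

local notation "πL" => RingQuot.mkAlgHom k (relLHS k a b)
local notation "πR" => RingQuot.mkAlgHom k (relRHS k a b)

noncomputable def liftLHS (u v : B)
    (h₁ : u * v * v + v * u * v + v * v * u + a • (u * u * u) = 0)
    (h₂ : v * u * u + u * v * u + u * u * v + b • (v * v * v) = 0) :
    RingQuot (relLHS k a b) →ₐ[k] B :=
  RingQuot.liftAlgHom k ⟨FreeAlgebra.lift k ![u, v], by
    rintro p q ⟨rfl | rfl, rfl⟩ <;> simpa [Xg, Yg]⟩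

@[simp]
theorem liftLHS_Xg (u v : B) (h₁ h₂) : liftLHS k a b u v h₁ h₂ (πL (Xg k)) = u := by
  simp [liftLHS, Xg]

@[simp]
theorem liftLHS_Yg (u v : B) (h₁ h₂) : liftLHS k a b u v h₁ h₂ (πL (Yg k)) = v := by
  simp [liftLHS, Yg]

noncomputable def liftRHS (u v : B)
    (h₁ : u * v * v + v * u * v + v * v * u + a • (u * u * u) = 0)
    (h₂ : v * u * u + u * v * u + u * u * v + b • (v * v * v) = 0)
    (hu : Commute (u * u * u) v) (hv : Commute (v * v * v) u) :
    RingQuot (relRHS k a b) →ₐ[k] B :=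
  RingQuot.liftAlgHom k ⟨FreeAlgebra.lift k ![u, v, u * u * u, v * v * v], by
    rintro p q ⟨hp, rfl⟩
    simp only [Set.mem_insert_iff, Set.mem_singleton_iff] at hp
    rcases hp with rfl | rfl | rfl | rfl | rfl | rfl | rfl | rfl | rfl <;>
      simp [G, sub_eq_zero]
    exacts [h₁, h₂, by noncomm_ring, hu.eq, hv.eq, by noncomm_ring,
      ((hu.mul_right hu).mul_right hu).eq]⟩

@[simp]
theorem liftRHS_G_zero (u v : B) (h₁ h₂ hu hv) :
    liftRHS k a b u v h₁ h₂ hu hv (πR (G k 0)) = u := by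
  simp [liftRHS, G]

@[simp]
theorem liftRHS_G_one (u v : B) (h₁ h₂ hu hv) :
    liftRHS k a b u v h₁ h₂ hu hv (πR (G k 1)) = v := by
  simp [liftRHS, G]

theorem mkLHS_rel_Xg :
    πL (Xg k) * πL (Yg k) * πL (Yg k) + πL (Yg k) * πL (Xg k) * πL (Yg k) +
      πL (Yg k) * πL (Yg k) * πL (Xg k) + a • (πL (Xg k) * πL (Xg k) * πL (Xg k)) = 0 := by
  simpa using RingQuot.mkAlgHom_rel k (s := relLHS k a b) ⟨Or.inl rfl, rfl⟩

theorem mkLHS_rel_Yg :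
    πL (Yg k) * πL (Xg k) * πL (Xg k) + πL (Xg k) * πL (Yg k) * πL (Xg k) +
      πL (Xg k) * πL (Xg k) * πL (Yg k) + b • (πL (Yg k) * πL (Yg k) * πL (Yg k)) = 0 := by
  simpa using RingQuot.mkAlgHom_rel k (s := relLHS k a b) ⟨Or.inr rfl, rfl⟩

theorem algHom_ext_LHS {f g : RingQuot (relLHS k a b) →ₐ[k] B}
    (hx : f (πL (Xg k)) = g (πL (Xg k))) (hy : f (πL (Yg k)) = g (πL (Yg k))) : f = g := by
  apply RingQuot.ringQuot_ext'
  apply FreeAlgebra.hom_ext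
  funext i
  fin_cases i
  exacts [hx, hy]

end CommRing

section Field

variable (k : Type*) [Field k] [CharZero k] (a b : k)

local notation "πR" => RingQuot.mkAlgHom k (relRHS k a b)

theorem mkRHS_G_two : πR (G k 2) = πR (G k 0) * πR (G k 0) * πR (G k 0) := by
  have h := RingQuot.mkAlgHom_rel k (s := relRHS k a b) ⟨Or.inl rfl, rfl⟩
  simp only [map_sub, map_smul, map_mul, map_zero, sub_eq_zero] at h
  exact (smul_right_injective _ three_ne_zero h).symm

theorem mkRHS_G_three : πR (G k 3) = πR (G k 1) * πR (G k 1) * πR (G k 1) := by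
  have h := RingQuot.mkAlgHom_rel k (s := relRHS k a b)
    ⟨Or.inr (Or.inr (Or.inr (Or.inl rfl))), rfl⟩
  simp only [map_sub, map_smul, map_mul, map_zero, sub_eq_zero] at h
  exact (smul_right_injective _ three_ne_zero h).symm

theorem mkRHS_rel_G_zero :
    πR (G k 0) * πR (G k 1) * πR (G k 1) + πR (G k 1) * πR (G k 0) * πR (G k 1) +
      πR (G k 1) * πR (G k 1) * πR (G k 0) + a • (πR (G k 0) * πR (G k 0) * πR (G k 0)) = 0 := by
  rw [← mkRHS_G_two]
  simpa using RingQuot.mkAlgHom_rel k (s := relRHS k a b) ⟨Or.inr (Or.inl rfl), rfl⟩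

theorem mkRHS_rel_G_one :
    πR (G k 1) * πR (G k 0) * πR (G k 0) + πR (G k 0) * πR (G k 1) * πR (G k 0) +
      πR (G k 0) * πR (G k 0) * πR (G k 1) + b • (πR (G k 1) * πR (G k 1) * πR (G k 1)) = 0 := by
  rw [← mkRHS_G_three]
  simpa using RingQuot.mkAlgHom_rel k (s := relRHS k a b) ⟨Or.inr (Or.inr (Or.inl rfl)), rfl⟩

theorem algHom_ext_RHS {B : Type*} [Ring B] [Algebra k B] {f g : RingQuot (relRHS k a b) →ₐ[k] B}
    (hx : f (πR (G k 0)) = g (πR (G k 0))) (hy : f (πR (G k 1)) = g (πR (G k 1))) : f = g := by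
  apply RingQuot.ringQuot_ext'
  apply FreeAlgebra.hom_ext
  funext i
  fin_cases i
  · exact hx
  · exact hy
  · change f (πR (G k 2)) = g (πR (G k 2))
    simp only [mkRHS_G_two, map_mul, hx]
  · change f (πR (G k 3)) = g (πR (G k 3))
    simp only [mkRHS_G_three, map_mul, hy]

end Field

/-- if `ab ≠ 1`, there is a `k`-algebra isomorphism
`k⟨x,y⟩/(xy² + yxy + y²x + ax³, yx² + xyx + x²y + by³) ≅ A(M₁, M₂)`
sending the images of `x` and `y` to the images of `x` and `y`. -/
theorem statement14 (k : Type*) [Field k] [CharZero k] (a b : k) (hab : a * b ≠ 1) :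
    ∃ e : RingQuot (relLHS k a b) ≃ₐ[k] RingQuot (relRHS k a b),
      e (RingQuot.mkAlgHom k (relLHS k a b) (Xg k)) =
        RingQuot.mkAlgHom k (relRHS k a b) (G k 0) ∧
      e (RingQuot.mkAlgHom k (relLHS k a b) (Yg k)) =
        RingQuot.mkAlgHom k (relRHS k a b) (G k 1) := by
  obtain ⟨hx, hy⟩ := commute_cubes_of_mul_ne_one hab (mkLHS_rel_Xg k a b) (mkLHS_rel_Yg k a b)
  let φ := liftLHS k a b _ _ (mkRHS_rel_G_zero k a b) (mkRHS_rel_G_one k a b)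
  let ψ := liftRHS k a b _ _ (mkLHS_rel_Xg k a b) (mkLHS_rel_Yg k a b) hx hy
  refine ⟨AlgEquiv.ofAlgHom φ ψ ?_ ?_, liftLHS_Xg .., liftLHS_Yg ..⟩
  · exact algHom_ext_RHS k a b (by simp [φ, ψ]) (by simp [φ, ψ])
  · exact algHom_ext_LHS k a b (by simp [φ, ψ]) (by simp [φ, ψ])
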